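/- arXiv:1309.1930 — 6 statements merged into one kernel-verified Lean document; each statement's English description precedes it below -/
import Mathlib

section
/- Let R : [0,∞) → ℝ be continuous and let ρ : [0,1] → (0,∞) be continuous and continuously differentiable on (0,1], satisfying ρ'(r) + R(ρ(r)) · ζ(r)/r² = 0 for all r ∈ (0,1], where ζ(r) = ∫₀^r z² ρ(z) dz. Define x(s) = e^{−s} ζ(e^s) and y(s) = e^{2s} ρ(e^s) for s ≤ 0. Then (x, y) is differentiable on (−∞,0] and satisfies x'(s) = y(s) − x(s) and y'(s) = 2 y(s) − e^{2s} R(e^{−2s} y(s)) x(s) for all s ∈ (−∞,0]; moreover 4π x(0) = 4π ∫₀¹ z² ρ(z) dz (the total mass of ρ over the unit ball of ℝ³) and lim_{s→−∞} e^{−2s} y(s) = ρ(0). -/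
open Real Filter Set

/-! Under `r = e^s` one has `d/ds = r d/dr`. By the fundamental theorem of calculus
`ζ' = r² ρ`, so `x' = -x + e^{2s} ρ(e^s) = y - x`, while `y' = 2y + e^{3s} ρ'(e^s)`, into which the
equation for `ρ'` is substituted. Since `e^{-2s} y(s) = ρ(e^s)`, the limit is continuity of `ρ` at `0`. -/

theorem ContinuousOn.hasDerivWithinAt_integral_Icc {E : Type*} [NormedAddCommGroup E]
    [NormedSpace ℝ E] [CompleteSpace E] {f : ℝ → E} {a b r : ℝ} (hf : ContinuousOn f (Icc a b))
    (hr : r ∈ Icc a b) :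
    HasDerivWithinAt (fun u => ∫ z in a..u, f z) (f r) (Icc a b) r := by
  -- the `Fact` provides the instance `FTCFilter.nhdsIcc`
  have : Fact (r ∈ Icc a b) := ⟨hr⟩
  exact intervalIntegral.integral_hasDerivWithinAt_right
    ((hf.mono (uIcc_subset_Icc (left_mem_Icc.2 (hr.1.trans hr.2)) hr)).intervalIntegrable)
    (hf.stronglyMeasurableAtFilter_nhdsWithin measurableSet_Icc r) (hf r hr)

theorem hasDerivWithinAt_exp_mul_comp_exp {g : ℝ → ℝ} {g' c s : ℝ} {S T : Set ℝ}
    (hg : HasDerivWithinAt g g' T (exp s)) (hST : MapsTo exp S T) :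
    HasDerivWithinAt (fun t => exp (c * t) * g (exp t))
      (c * exp (c * s) * g (exp s) + exp (c * s) * (g' * exp s)) S s :=
  ((((hasDerivAt_id' s).const_mul c).exp.hasDerivWithinAt).mul
    (hg.comp s (hasDerivAt_exp s).hasDerivWithinAt hST)).congr_deriv
    (by rw [Function.comp_apply]; ring)

theorem change_of_variables_dynamical_system_general (R ρ x y : ℝ → ℝ)
    (hρc : ContinuousOn ρ (Set.Icc 0 1))
    (hODE : ∀ r ∈ Set.Ioc (0 : ℝ) 1,
      HasDerivWithinAt ρ
        (-(R (ρ r) * (∫ z in (0 : ℝ)..r, z ^ 2 * ρ z) / r ^ 2)) (Set.Ioc 0 1) r)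
    (hx : ∀ s : ℝ, x s = Real.exp (-s) * ∫ z in (0 : ℝ)..Real.exp s, z ^ 2 * ρ z)
    (hy : ∀ s : ℝ, y s = Real.exp (2 * s) * ρ (Real.exp s)) :
    (∀ s ∈ Set.Iic (0 : ℝ), HasDerivWithinAt x (y s - x s) (Set.Iic 0) s) ∧
    (∀ s ∈ Set.Iic (0 : ℝ), HasDerivWithinAt y
      (2 * y s - Real.exp (2 * s) * R (Real.exp (-2 * s) * y s) * x s) (Set.Iic 0) s) ∧
    (4 * Real.pi * x 0 = 4 * Real.pi * ∫ z in (0 : ℝ)..1, z ^ 2 * ρ z) ∧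
    Filter.Tendsto (fun s => Real.exp (-2 * s) * y s) Filter.atBot (nhds (ρ 0)) := by
  have hρy (s : ℝ) : exp (-2 * s) * y s = ρ (exp s) := by
    rw [hy, ← mul_assoc, ← exp_add]; simp
  have hexp_two_mul (s : ℝ) : exp (2 * s) = exp s ^ 2 := by rw [sq, ← exp_add, two_mul]
  have hexp_mem : MapsTo exp (Iic 0) (Ioc 0 1) := fun s hs => ⟨exp_pos s, exp_le_one_iff.2 hs⟩
  refine ⟨fun s hs => ?_, fun s hs => ?_, by simp [hx], ?_⟩
  · have hf : ContinuousOn (fun z => z ^ 2 * ρ z) (Icc 0 1) := (continuousOn_pow 2).mul hρc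
    have h := hasDerivWithinAt_exp_mul_comp_exp (c := -1)
      (hf.hasDerivWithinAt_integral_Icc (Ioc_subset_Icc_self (hexp_mem hs)))
      (hexp_mem.mono_right Ioc_subset_Icc_self)
    simp only [neg_one_mul] at h
    refine (h.congr (fun t _ => hx t) (hx s)).congr_deriv ?_
    rw [hy, hx, exp_neg, hexp_two_mul]
    field_simp
    ring
  · refine ((hasDerivWithinAt_exp_mul_comp_exp (hODE _ (hexp_mem hs)) hexp_mem).congr
      (fun t _ => hy t) (hy s)).congr_deriv ?_
    rw [hρy, hy, hx, exp_neg, hexp_two_mul]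
    field_simp
    ring
  · have hρ0 : ContinuousWithinAt ρ (Ioi 0) 0 :=
      ((continuousWithinAt_Icc_iff_Ici zero_lt_one).1 (hρc 0 ⟨le_rfl, zero_le_one⟩)).mono
        Ioi_subset_Ici_self
    simpa only [hρy, Function.comp_def] using hρ0.tendsto.comp tendsto_exp_atBot_nhdsGT

/-- the logarithmic change of variables `x(s) = e^{-s} ζ(e^s)`,
`y(s) = e^{2s} ρ(e^s)`, with `ζ(r) = ∫₀^r z² ρ(z) dz`, turns the equation
`ρ' + R(ρ) ζ(r)/r² = 0` on `(0,1]` into the non-autonomous system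
`x' = y − x`, `y' = 2y − e^{2s} R(e^{−2s} y) x` on `(−∞,0]`; moreover
`4π x(0)` is the total mass and `e^{−2s} y(s) → ρ(0)` as `s → −∞`. -/
theorem change_of_variables_dynamical_system (R ρ x y : ℝ → ℝ)
    (hR : ContinuousOn R (Set.Ici 0))
    (hρc : ContinuousOn ρ (Set.Icc 0 1))
    (hρpos : ∀ r ∈ Set.Icc (0 : ℝ) 1, 0 < ρ r)
    (hρC1 : ContDiffOn ℝ 1 ρ (Set.Ioc 0 1))
    (hODE : ∀ r ∈ Set.Ioc (0 : ℝ) 1,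
      HasDerivWithinAt ρ
        (-(R (ρ r) * (∫ z in (0 : ℝ)..r, z ^ 2 * ρ z) / r ^ 2)) (Set.Ioc 0 1) r)
    (hx : ∀ s : ℝ, x s = Real.exp (-s) * ∫ z in (0 : ℝ)..Real.exp s, z ^ 2 * ρ z)
    (hy : ∀ s : ℝ, y s = Real.exp (2 * s) * ρ (Real.exp s)) :
    (∀ s ∈ Set.Iic (0 : ℝ), HasDerivWithinAt x (y s - x s) (Set.Iic 0) s) ∧
    (∀ s ∈ Set.Iic (0 : ℝ), HasDerivWithinAt y
      (2 * y s - Real.exp (2 * s) * R (Real.exp (-2 * s) * y s) * x s) (Set.Iic 0) s) ∧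
    (4 * Real.pi * x 0 = 4 * Real.pi * ∫ z in (0 : ℝ)..1, z ^ 2 * ρ z) ∧
    Filter.Tendsto (fun s => Real.exp (-2 * s) * y s) Filter.atBot (nhds (ρ 0)) :=
  change_of_variables_dynamical_system_general R ρ x y hρc hODE hx hy
end

section
/- For every z ∈ ℝ, f_{−1/2}(z) ≤ 2 f_{1/2}(z), where f_α(z) = ∫₀^∞ x^α / (1 + exp(x − z)) dx. Consequently, for any μ > 0, the Fermi–Dirac function R(z) = (μ/4) f_{−1/2}(f_{1/2}^{−1}(2z/μ)) satisfies R(z) ≤ z for all z > 0. -/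
open Real Filter Set

/-- The Fermi function `f_α(z) = ∫₀^∞ x^α / (1 + exp(x − z)) dx`. -/
noncomputable def fermi (α z : ℝ) : ℝ :=
  ∫ x in Set.Ioi (0 : ℝ), x ^ α / (1 + Real.exp (x - z))

/-!
Proof idea: integrating by parts against `d/dx x^α = α x^(α-1)` (the boundary terms vanish for
`α > 0`) gives `α f_{α-1}(z) = ∫₀^∞ x^α e^(x-z) / (1 + e^(x-z))² dx`, and
`e / (1 + e)² ≤ 1 / (1 + e)` bounds this by `f_α(z)`. Take `α = 1/2`.
-/

open MeasureTheory

section Fermi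

variable {α : ℝ} (z : ℝ)

lemma rpow_div_one_add_exp_le {x : ℝ} (hx : 0 < x) :
    x ^ α / (1 + exp (x - z)) ≤ exp z * (x ^ α * exp (-x)) := by
  calc x ^ α / (1 + exp (x - z)) ≤ x ^ α / exp (x - z) := by
        gcongr
        linarith [exp_pos (x - z)]
    _ = exp z * (x ^ α * exp (-x)) := by
        rw [exp_sub, exp_neg]
        field_simp

lemma continuousOn_rpow_div_one_add_exp :
    ContinuousOn (fun x : ℝ => x ^ α / (1 + exp (x - z))) (Ioi 0) :=
  ContinuousOn.div
    (fun x hx => (continuousAt_rpow_const x α (Or.inl (ne_of_gt hx))).continuousWithinAt)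
    (by fun_prop) fun x _ => by positivity

lemma integrableOn_rpow_div_one_add_exp (hα : -1 < α) :
    IntegrableOn (fun x : ℝ => x ^ α / (1 + exp (x - z))) (Ioi 0) := by
  have hGamma : IntegrableOn (fun x : ℝ => exp z * (exp (-x) * x ^ α)) (Ioi 0) := by
    simpa [IntegrableOn] using
      (GammaIntegral_convergent (s := α + 1) (by linarith)).const_mul (exp z)
  refine hGamma.mono'
    ((continuousOn_rpow_div_one_add_exp z).aestronglyMeasurable measurableSet_Ioi) ?_
  filter_upwards [ae_restrict_mem measurableSet_Ioi] with x (hx : 0 < x)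
  rw [norm_of_nonneg (by positivity), mul_comm (exp (-x))]
  exact rpow_div_one_add_exp_le z hx

lemma tendsto_rpow_div_one_add_exp_atTop :
    Tendsto (fun x : ℝ => x ^ α / (1 + exp (x - z))) atTop (nhds 0) := by
  have hbound : Tendsto (fun x : ℝ => exp z * (x ^ α * exp (-x))) atTop (nhds 0) := by
    simpa using (tendsto_rpow_mul_exp_neg_mul_atTop_nhds_zero α 1 one_pos).const_mul (exp z)
  refine squeeze_zero' ?_ ?_ hbound
  · filter_upwards [eventually_gt_atTop 0] with x hx
    positivity
  · filter_upwards [eventually_gt_atTop 0] with x hx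
    exact rpow_div_one_add_exp_le z hx

lemma hasDerivAt_rpow_div_one_add_exp {x : ℝ} (hx : 0 < x) :
    HasDerivAt (fun y : ℝ => y ^ α / (1 + exp (y - z)))
      (α * (x ^ (α - 1) / (1 + exp (x - z))) -
        x ^ α * (exp (x - z) / (1 + exp (x - z)) ^ 2)) x := by
  have hden : HasDerivAt (fun y : ℝ => 1 + exp (y - z)) (exp (x - z)) x := by
    simpa using (((hasDerivAt_id x).sub_const z).exp).const_add 1
  refine ((hasDerivAt_rpow_const (p := α) (Or.inl hx.ne')).div hden (by positivity)).congr_deriv ?_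
  field_simp

lemma exp_div_one_add_exp_sq_le (t : ℝ) : exp t / (1 + exp t) ^ 2 ≤ 1 / (1 + exp t) := by
  rw [div_le_div_iff₀ (by positivity) (by positivity)]
  nlinarith [exp_pos t]

lemma integrableOn_rpow_mul_exp_div_one_add_exp_sq (hα : -1 < α) :
    IntegrableOn (fun x : ℝ => x ^ α * (exp (x - z) / (1 + exp (x - z)) ^ 2)) (Ioi 0) := by
  refine (integrableOn_rpow_div_one_add_exp z hα).mono' ?_ ?_
  · refine ContinuousOn.aestronglyMeasurable ?_ measurableSet_Ioi
    exact ContinuousOn.mul (fun x hx =>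
      (continuousAt_rpow_const x α (Or.inl (ne_of_gt hx))).continuousWithinAt)
      ((continuous_exp.comp (continuous_sub_right z)).div (by fun_prop)
        fun x => by positivity).continuousOn
  · filter_upwards [ae_restrict_mem measurableSet_Ioi] with x (hx : 0 < x)
    rw [norm_of_nonneg (by positivity), div_eq_mul_one_div (x ^ α)]
    exact mul_le_mul_of_nonneg_left (exp_div_one_add_exp_sq_le _) (by positivity)

theorem mul_fermi_sub_one (hα : 0 < α) :
    α * fermi (α - 1) z =
      ∫ x in Ioi 0, x ^ α * (exp (x - z) / (1 + exp (x - z)) ^ 2) := by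
  have hcont : ContinuousWithinAt (fun x : ℝ => x ^ α / (1 + exp (x - z))) (Ici 0) 0 :=
    ((continuousAt_rpow_const 0 α (Or.inr hα.le)).div (by fun_prop)
      (by positivity)).continuousWithinAt
  have hint₁ := (integrableOn_rpow_div_one_add_exp z (α := α - 1) (by linarith)).const_mul α
  have hint₂ := integrableOn_rpow_mul_exp_div_one_add_exp_sq z (α := α) (by linarith)
  have hparts := integral_Ioi_of_hasDerivAt_of_tendsto hcont
    (fun x hx => hasDerivAt_rpow_div_one_add_exp z hx) (hint₁.sub hint₂)
    (tendsto_rpow_div_one_add_exp_atTop z)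
  rw [integral_sub hint₁ hint₂, integral_const_mul, zero_rpow hα.ne', zero_div, sub_zero,
    sub_eq_zero] at hparts
  exact hparts

theorem mul_fermi_sub_one_le (hα : 0 < α) : α * fermi (α - 1) z ≤ fermi α z := by
  rw [mul_fermi_sub_one z hα]
  refine setIntegral_mono_on (integrableOn_rpow_mul_exp_div_one_add_exp_sq z (by linarith))
    (integrableOn_rpow_div_one_add_exp z (by linarith)) measurableSet_Ioi fun x (hx : 0 < x) => ?_
  rw [div_eq_mul_one_div (x ^ α)]
  exact mul_le_mul_of_nonneg_left (exp_div_one_add_exp_sq_le _) (by positivity)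

end Fermi

/-- `f_{−1/2}(z) ≤ 2 f_{1/2}(z)` for all `z ∈ ℝ`; consequently, for
`μ > 0` the Fermi–Dirac nonlinearity `R(z) = (μ/4) f_{−1/2}(f_{1/2}^{−1}(2z/μ))`
satisfies `R(z) ≤ z` for all `z > 0` (stated via any `t` with
`f_{1/2}(t) = 2z/μ`). -/
theorem fermi_half_inequality :
    (∀ z : ℝ, fermi (-(1 / 2)) z ≤ 2 * fermi (1 / 2) z) ∧
    (∀ μ : ℝ, 0 < μ → ∀ z : ℝ, 0 < z → ∀ t : ℝ,
      fermi (1 / 2) t = 2 * z / μ → μ / 4 * fermi (-(1 / 2)) t ≤ z) := by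
  have half : ∀ z : ℝ, fermi (-(1 / 2)) z ≤ 2 * fermi (1 / 2) z := fun z => by
    have h := mul_fermi_sub_one_le z (α := 1 / 2) (by norm_num)
    norm_num at h ⊢
    linarith
  refine ⟨half, fun μ hμ z _ t ht => ?_⟩
  calc μ / 4 * fermi (-(1 / 2)) t ≤ μ / 4 * (2 * fermi (1 / 2) t) := by
        gcongr
        exact half t
    _ = z := by
        rw [ht]
        field_simp
        ring
end

section
/- Let R : ℝ → ℝ be continuous with R(z) ≥ 0 for all z ≥ 0. Suppose x, y : (−∞,0] → ℝ are differentiable, satisfy x'(s) = y(s) − x(s) and y'(s) = 2 y(s) − e^{2s} R(e^{−2s} y(s)) x(s) for all s ≤ 0, satisfy x(s) ≥ 0 and y(s) ≥ 0 for all s ≤ 0, and suppose that for some P > 0, e^{−2s} y(s) → P and e^{−2s} x(s) → P/3 as s → −∞. Then for all s ≤ 0: (i) y(s) ≤ P e^{2s}; (ii) 3 x(s) ≥ y(s); and (iii) x(s) ≤ (P/3) e^{2s}. These follow from the identities (e^{−2s} y(s))' = −e^{2s} R(e^{−2s} y(s)) x(s) · e^{−2s} ≤ 0 (i.e. s ↦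 e^{−2s}y(s) is nonincreasing), (e^{s}(3x(s) − y(s)))' = e^{3s} R(e^{−2s} y(s)) x(s) ≥ 0, and (e^{−2s} x(s))' = −e^{−2s}(3x(s) − y(s)) ≤ 0. -/
/-!
Put `u(s) = e^{-2s} y(s)` and `w(s) = e^{-2s} x(s)`. The system becomes `u' = -R(u) x ≤ 0` and
`w' = u - 3w`, so `(e^{3s}(3w - u))' = -e^{3s} u' ≥ 0`. Since `3w - u → 0` at `-∞`, the function
`e^{3s}(3w - u)` increases from `0`, which gives `u ≤ 3w`, i.e. `w' ≤ 0`. Thus `u` and `w` both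
decrease from their limits `P` and `P/3` at `-∞`.
-/

open Real Filter Set Topology

lemma hasDerivWithinAt_exp_mul_mul {f : ℝ → ℝ} {f' c s : ℝ} {S : Set ℝ}
    (hf : HasDerivWithinAt f f' S s) :
    HasDerivWithinAt (fun t => exp (c * t) * f t) (exp (c * s) * (c * f s + f')) S s :=
  (((hasDerivAt_id' s).const_mul c).exp.hasDerivWithinAt.mul hf).congr_deriv (by ring)

section MonotoneFromMinusInfinity

variable {f f' : ℝ → ℝ} {a L : ℝ}

lemma le_of_hasDerivWithinAt_nonpos_of_tendsto_atBot
    (hf : ∀ s ≤ a, HasDerivWithinAt f (f' s) (Iic a) s) (hf' : ∀ s ≤ a, f' s ≤ 0)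
    (hL : Tendsto f atBot (𝓝 L)) : ∀ s ≤ a, f s ≤ L := by
  have hanti : AntitoneOn f (Iic a) := by
    refine antitoneOn_of_hasDerivWithinAt_nonpos (f' := f') (convex_Iic a)
      (fun s hs => (hf s hs).continuousWithinAt) (fun s hs => ?_) (fun s hs => ?_)
    · rw [interior_Iic] at hs ⊢
      exact (hf s hs.le).mono Iio_subset_Iic_self
    · rw [interior_Iic] at hs
      exact hf' s hs.le
  intro s hs
  refine ge_of_tendsto hL ?_
  filter_upwards [eventually_le_atBot s] with t hts
  exact hanti (hts.trans hs) hs hts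

lemma ge_of_hasDerivWithinAt_nonneg_of_tendsto_atBot
    (hf : ∀ s ≤ a, HasDerivWithinAt f (f' s) (Iic a) s) (hf' : ∀ s ≤ a, 0 ≤ f' s)
    (hL : Tendsto f atBot (𝓝 L)) : ∀ s ≤ a, L ≤ f s := fun s hs =>
  neg_le_neg_iff.1 <| le_of_hasDerivWithinAt_nonpos_of_tendsto_atBot (f' := fun s => -f' s)
    (fun s hs => (hf s hs).neg) (fun s hs => neg_nonpos.2 (hf' s hs)) hL.neg s hs

end MonotoneFromMinusInfinity

lemma le_const_mul_of_hasDerivWithinAt_of_tendsto_atBot {u u' w : ℝ → ℝ} {a c : ℝ} (hc : 0 < c)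
    (hu : ∀ s ≤ a, HasDerivWithinAt u (u' s) (Iic a) s) (hu' : ∀ s ≤ a, u' s ≤ 0)
    (hw : ∀ s ≤ a, HasDerivWithinAt w (u s - c * w s) (Iic a) s)
    (hlim : Tendsto (fun s => c * w s - u s) atBot (𝓝 0)) :
    ∀ s ≤ a, u s ≤ c * w s := by
  have hv : ∀ s ≤ a, HasDerivWithinAt (fun t => exp (c * t) * (c * w t - u t))
      (exp (c * s) * -u' s) (Iic a) s := fun s hs =>
    (hasDerivWithinAt_exp_mul_mul (((hw s hs).const_mul c).sub (hu s hs))).congr_deriv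
      (by simp only [Pi.sub_apply]; ring)
  have hexp : Tendsto (fun s => exp (c * s)) atBot (𝓝 0) :=
    tendsto_exp_atBot.comp (tendsto_id.const_mul_atBot hc)
  have hvlim := hexp.mul hlim
  rw [mul_zero] at hvlim
  intro s hs
  have hv_nonneg := ge_of_hasDerivWithinAt_nonneg_of_tendsto_atBot hv
    (fun t ht => mul_nonneg (exp_pos _).le (neg_nonneg.2 (hu' t ht))) hvlim s hs
  exact sub_nonneg.1 ((mul_nonneg_iff_of_pos_left (exp_pos _)).1 hv_nonneg)

lemma exp_neg_mul_mul_le_iff {c s a b : ℝ} : exp (-c * s) * a ≤ b ↔ a ≤ b * exp (c * s) := by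
  rw [neg_mul, exp_neg, ← div_eq_inv_mul, div_le_iff₀ (exp_pos _)]

theorem a_priori_bounds_general (R x y : ℝ → ℝ) (P : ℝ)
    (hR : ∀ z : ℝ, 0 ≤ z → 0 ≤ R z)
    (hx : ∀ s ≤ (0 : ℝ), HasDerivWithinAt x (y s - x s) (Set.Iic 0) s)
    (hy : ∀ s ≤ (0 : ℝ), HasDerivWithinAt y
      (2 * y s - Real.exp (2 * s) * R (Real.exp (-2 * s) * y s) * x s) (Set.Iic 0) s)
    (hpos : ∀ s ≤ (0 : ℝ), 0 ≤ x s ∧ 0 ≤ y s)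
    (hylim : Filter.Tendsto (fun s => Real.exp (-2 * s) * y s) Filter.atBot (nhds P))
    (hxlim : Filter.Tendsto (fun s => Real.exp (-2 * s) * x s) Filter.atBot (nhds (P / 3))) :
    ∀ s ≤ (0 : ℝ),
      y s ≤ P * Real.exp (2 * s) ∧
      y s ≤ 3 * x s ∧
      x s ≤ P / 3 * Real.exp (2 * s) := by
  set u : ℝ → ℝ := fun s => exp (-2 * s) * y s
  set w : ℝ → ℝ := fun s => exp (-2 * s) * x s
  have hu : ∀ s ≤ (0 : ℝ), HasDerivWithinAt u (-(R (u s) * x s)) (Iic 0) s := fun s hs =>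
    (hasDerivWithinAt_exp_mul_mul (hy s hs)).congr_deriv <| by
      have hexp : exp (-2 * s) * exp (2 * s) = 1 := by rw [← exp_add]; norm_num
      linear_combination (-(R (u s) * x s)) * hexp
  have hu' : ∀ s ≤ (0 : ℝ), -(R (u s) * x s) ≤ 0 := fun s hs =>
    neg_nonpos.2 (mul_nonneg (hR _ (mul_nonneg (exp_pos _).le (hpos s hs).2)) (hpos s hs).1)
  have hw : ∀ s ≤ (0 : ℝ), HasDerivWithinAt w (u s - 3 * w s) (Iic 0) s := fun s hs =>
    (hasDerivWithinAt_exp_mul_mul (hx s hs)).congr_deriv (by ring)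
  have hlim : Tendsto (fun s => 3 * w s - u s) atBot (𝓝 0) := by
    convert (hxlim.const_mul 3).sub hylim using 2
    ring
  have hcomp := le_const_mul_of_hasDerivWithinAt_of_tendsto_atBot three_pos hu hu' hw hlim
  have hu_le := le_of_hasDerivWithinAt_nonpos_of_tendsto_atBot hu hu' hylim
  have hw_le := le_of_hasDerivWithinAt_nonpos_of_tendsto_atBot hw
    (fun s hs => sub_nonpos.2 (hcomp s hs)) hxlim
  intro s hs
  refine ⟨exp_neg_mul_mul_le_iff.1 (hu_le s hs), ?_, exp_neg_mul_mul_le_iff.1 (hw_le s hs)⟩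
  refine le_of_mul_le_mul_left ?_ (exp_pos (-2 * s))
  linear_combination hcomp s hs

/-- for a nonnegative trajectory of the non-autonomous system on
`(−∞,0]` with `R ≥ 0` on `[0,∞)` and limits `e^{−2s} y(s) → P`,
`e^{−2s} x(s) → P/3` as `s → −∞`, one has for all `s ≤ 0`:
(i) `y(s) ≤ P e^{2s}`; (ii) `3 x(s) ≥ y(s)`; (iii) `x(s) ≤ (P/3) e^{2s}`. -/
theorem a_priori_bounds (R x y : ℝ → ℝ) (P : ℝ) (hP : 0 < P)
    (hRc : Continuous R)
    (hR : ∀ z : ℝ, 0 ≤ z → 0 ≤ R z)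
    (hx : ∀ s ≤ (0 : ℝ), HasDerivWithinAt x (y s - x s) (Set.Iic 0) s)
    (hy : ∀ s ≤ (0 : ℝ), HasDerivWithinAt y
      (2 * y s - Real.exp (2 * s) * R (Real.exp (-2 * s) * y s) * x s) (Set.Iic 0) s)
    (hpos : ∀ s ≤ (0 : ℝ), 0 ≤ x s ∧ 0 ≤ y s)
    (hylim : Filter.Tendsto (fun s => Real.exp (-2 * s) * y s) Filter.atBot (nhds P))
    (hxlim : Filter.Tendsto (fun s => Real.exp (-2 * s) * x s) Filter.atBot (nhds (P / 3))) :
    ∀ s ≤ (0 : ℝ),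
      y s ≤ P * Real.exp (2 * s) ∧
      y s ≤ 3 * x s ∧
      x s ≤ P / 3 * Real.exp (2 * s) :=
  a_priori_bounds_general R x y P hR hx hy hpos hylim hxlim
end

section
/- For every α > −1 and every z ∈ ℝ, the integral f_α(z) = ∫₀^∞ x^α / (1 + exp(x − z)) dx converges and is positive; moreover the function f_α : ℝ → (0,∞) is strictly increasing and is a bijection from ℝ onto (0,∞), i.e. f_α(z) → 0 as z → −∞ and f_α(z) → ∞ as z → +∞. -/
/-!
For `x > 0` the integrand `x ^ α / (1 + exp (x - z))` is positive, strictly increasing in `z`,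
and at most `exp z * (exp (-x) * x ^ α)`, whose integral is `exp z * Γ(α + 1)` once `α > -1`.
Hence `f_α` is finite, positive, strictly increasing, continuous by dominated convergence, and
tends to `0` as `z → -∞`. On `(0, z]` the integrand is at least `x ^ α / 2`, so
`f_α z ≥ z ^ (α + 1) / (2 (α + 1)) → ∞`, and the intermediate value theorem gives the
bijection onto `(0, ∞)`.
-/

open Real Filter Set MeasureTheory

open Topology

section

variable {X : Type*} [MeasurableSpace X] {μ : Measure X} {s : Set X} {f g : X → ℝ}

theorem setIntegral_pos_of_forall_pos (hs : MeasurableSet s) (hμs : μ s ≠ 0)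
    (hf : IntegrableOn f s μ) (hpos : ∀ x ∈ s, 0 < f x) : 0 < ∫ x in s, f x ∂μ := by
  refine (setIntegral_pos_iff_support_of_nonneg_ae
    (ae_restrict_of_forall_mem hs fun x hx => (hpos x hx).le) hf).2 ?_
  rwa [inter_eq_right.2 fun x hx => Function.mem_support.2 (hpos x hx).ne', pos_iff_ne_zero]

theorem setIntegral_lt_setIntegral_of_forall_lt (hs : MeasurableSet s) (hμs : μ s ≠ 0)
    (hf : IntegrableOn f s μ) (hg : IntegrableOn g s μ) (hlt : ∀ x ∈ s, f x < g x) :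
    ∫ x in s, f x ∂μ < ∫ x in s, g x ∂μ := by
  have := setIntegral_pos_of_forall_pos (f := fun x => g x - f x) hs hμs (hg.sub hf)
    fun x hx => sub_pos.2 (hlt x hx)
  rwa [integral_sub hg hf, sub_pos] at this

end

theorem integrableOn_exp_neg_mul_rpow {α : ℝ} (hα : -1 < α) :
    IntegrableOn (fun x => exp (-x) * x ^ α) (Ioi 0) := by
  simpa using GammaIntegral_convergent (s := α + 1) (by linarith)

theorem Gamma_add_one_eq_integral {α : ℝ} (hα : -1 < α) :
    Gamma (α + 1) = ∫ x in Ioi 0, exp (-x) * x ^ α := by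
  simp [Gamma_eq_integral (s := α + 1) (by linarith)]

section FermiIntegrand

variable {α x : ℝ}

theorem fermi_integrand_pos (hx : 0 < x) (z : ℝ) : 0 < x ^ α / (1 + exp (x - z)) := by
  positivity

theorem fermi_integrand_strictMono (hx : 0 < x) :
    StrictMono fun z => x ^ α / (1 + exp (x - z)) := fun z₁ z₂ hz => by
  dsimp only
  gcongr

theorem fermi_integrand_le_exp_mul (hx : 0 ≤ x) (z : ℝ) :
    x ^ α / (1 + exp (x - z)) ≤ exp z * (exp (-x) * x ^ α) := by
  calc x ^ α / (1 + exp (x - z)) ≤ x ^ α / exp (x - z) := by gcongr; linarith [exp_pos (x - z)]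
    _ = exp z * (exp (-x) * x ^ α) := by rw [exp_sub, exp_neg]; field_simp

theorem continuousOn_fermi_integrand (α z : ℝ) :
    ContinuousOn (fun x => x ^ α / (1 + exp (x - z))) (Ioi 0) :=
  ContinuousOn.div
    (fun x hx => (continuousAt_rpow_const x α (.inl (ne_of_gt hx))).continuousWithinAt)
    (by fun_prop) fun x _ => by positivity

end FermiIntegrand

section Fermi

variable {α : ℝ}

theorem integrableOn_fermi_integrand (hα : -1 < α) (z : ℝ) :
    IntegrableOn (fun x => x ^ α / (1 + exp (x - z))) (Ioi 0) := by
  refine ((integrableOn_exp_neg_mul_rpow hα).const_mul (exp z)).mono'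
    ((continuousOn_fermi_integrand α z).aestronglyMeasurable measurableSet_Ioi) ?_
  filter_upwards [ae_restrict_mem measurableSet_Ioi] with x hx
  rw [norm_of_nonneg (fermi_integrand_pos hx z).le]
  exact fermi_integrand_le_exp_mul (le_of_lt hx) z

theorem fermi_pos (hα : -1 < α) (z : ℝ) : 0 < fermi α z :=
  setIntegral_pos_of_forall_pos measurableSet_Ioi (by simp) (integrableOn_fermi_integrand hα z)
    fun _ hx => fermi_integrand_pos hx z

theorem fermi_strictMono (hα : -1 < α) : StrictMono (fermi α) := fun _ _ hz =>
  setIntegral_lt_setIntegral_of_forall_lt measurableSet_Ioi (by simp)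
    (integrableOn_fermi_integrand hα _) (integrableOn_fermi_integrand hα _)
    fun _ hx => fermi_integrand_strictMono hx hz

theorem fermi_le_exp_mul_Gamma (hα : -1 < α) (z : ℝ) :
    fermi α z ≤ exp z * Gamma (α + 1) := by
  rw [Gamma_add_one_eq_integral hα, ← integral_const_mul]
  exact setIntegral_mono_on (integrableOn_fermi_integrand hα z)
    ((integrableOn_exp_neg_mul_rpow hα).const_mul _) measurableSet_Ioi
    fun x hx => fermi_integrand_le_exp_mul (le_of_lt hx) z

theorem tendsto_fermi_atBot (hα : -1 < α) : Tendsto (fermi α) atBot (𝓝 0) := by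
  have hbound : Tendsto (fun z => exp z * Gamma (α + 1)) atBot (𝓝 0) := by
    simpa using tendsto_exp_atBot.mul_const (Gamma (α + 1))
  exact tendsto_of_tendsto_of_tendsto_of_le_of_le tendsto_const_nhds hbound
    (fun z => (fermi_pos hα z).le) (fermi_le_exp_mul_Gamma hα)

theorem continuous_fermi (hα : -1 < α) : Continuous (fermi α) := by
  refine continuous_iff_continuousAt.2 fun z₀ => continuousAt_of_dominated
    (bound := fun x => exp (z₀ + 1) * (exp (-x) * x ^ α)) ?_ ?_
    ((integrableOn_exp_neg_mul_rpow hα).const_mul _) ?_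
  · exact .of_forall fun z =>
      (continuousOn_fermi_integrand α z).aestronglyMeasurable measurableSet_Ioi
  · filter_upwards [Iio_mem_nhds (lt_add_one z₀)] with z hz
    filter_upwards [ae_restrict_mem measurableSet_Ioi] with x hx
    rw [norm_of_nonneg (fermi_integrand_pos hx z).le]
    refine (fermi_integrand_le_exp_mul (le_of_lt hx) z).trans ?_
    gcongr
    · exact mul_nonneg (exp_nonneg _) (rpow_nonneg (le_of_lt hx) _)
    · exact hz.le
  · exact .of_forall fun x => continuousAt_const.div (by fun_prop) (by positivity)

theorem rpow_div_le_fermi (hα : -1 < α) {z : ℝ} (hz : 0 ≤ z) :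
    z ^ (α + 1) / (2 * (α + 1)) ≤ fermi α z := by
  have hint : IntegrableOn (fun x : ℝ => x ^ α / 2) (Ioc 0 z) :=
    (intervalIntegral.intervalIntegrable_rpow' hα).1.div_const 2
  calc z ^ (α + 1) / (2 * (α + 1)) = ∫ x in Ioc 0 z, x ^ α / 2 := by
        rw [integral_div, ← intervalIntegral.integral_of_le hz, integral_rpow (.inl hα),
          zero_rpow (by linarith), sub_zero, div_div, mul_comm]
    _ ≤ ∫ x in Ioc 0 z, x ^ α / (1 + exp (x - z)) := by
        refine setIntegral_mono_on hint ((integrableOn_fermi_integrand hα z).mono_set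
          Ioc_subset_Ioi_self) measurableSet_Ioc fun x hx => ?_
        have : exp (x - z) ≤ 1 := exp_le_one_iff.2 (by linarith [hx.2])
        gcongr
        · exact rpow_nonneg hx.1.le _
        · linarith
    _ ≤ fermi α z := setIntegral_mono_set (integrableOn_fermi_integrand hα z)
        (ae_restrict_of_forall_mem measurableSet_Ioi fun x hx => (fermi_integrand_pos hx z).le)
        Ioc_subset_Ioi_self.eventuallyLE

theorem tendsto_fermi_atTop (hα : -1 < α) : Tendsto (fermi α) atTop atTop := by
  have hlower : Tendsto (fun z : ℝ => z ^ (α + 1) / (2 * (α + 1))) atTop atTop :=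
    (tendsto_rpow_atTop (by linarith)).atTop_div_const (by linarith)
  exact tendsto_atTop_mono' _ ((eventually_ge_atTop 0).mono fun z hz => rpow_div_le_fermi hα hz)
    hlower

theorem bijOn_fermi (hα : -1 < α) : BijOn (fermi α) univ (Ioi 0) :=
  ⟨fun z _ => fermi_pos hα z, (fermi_strictMono hα).injective.injOn,
    isPreconnected_univ.intermediate_value_Ioi (by simp) (by simp)
      (continuous_fermi hα).continuousOn (tendsto_fermi_atBot hα) (tendsto_fermi_atTop hα)⟩

end Fermi

/-- for `α > −1`, the Fermi integral converges for every `z`, is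
positive, and `f_α` is a strictly increasing bijection from `ℝ` onto `(0,∞)`,
with `f_α(z) → 0` as `z → −∞` and `f_α(z) → ∞` as `z → +∞`. -/
theorem fermi_basic_properties (α : ℝ) (hα : -1 < α) :
    (∀ z : ℝ, MeasureTheory.IntegrableOn
      (fun x => x ^ α / (1 + Real.exp (x - z))) (Set.Ioi 0)) ∧
    (∀ z : ℝ, 0 < fermi α z) ∧
    StrictMono (fermi α) ∧
    Set.BijOn (fermi α) Set.univ (Set.Ioi 0) ∧
    Filter.Tendsto (fermi α) Filter.atBot (nhds 0) ∧
    Filter.Tendsto (fermi α) Filter.atTop Filter.atTop :=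
  ⟨integrableOn_fermi_integrand hα, fermi_pos hα, fermi_strictMono hα, bijOn_fermi hα,
    tendsto_fermi_atBot hα, tendsto_fermi_atTop hα⟩
end

section
/- For every α > −1, (α + 1) f_α(z) / z^{α+1} → 1 as z → +∞, where f_α(z) = ∫₀^∞ x^α / (1 + exp(x − z)) dx; i.e. f_α(z) is asymptotically equivalent to z^{α+1}/(α+1) as z → +∞. -/
/-!
Substituting `x = z t` gives `f_α(z) = z^{α+1} ∫₀^∞ t^α / (1 + e^{z(t-1)}) dt`. As `z → ∞` the
new integrand tends to `t^α` on `(0, 1)` and to `0` on `(1, ∞)`, and for `z ≥ 1` it is dominated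
by the Gamma integrand `e · e^{-t} t^α`, so by dominated convergence the integral tends to
`∫₀^1 t^α dt = 1/(α+1)`.
-/

open Real Filter Set MeasureTheory Topology

theorem fermi_eq_rpow_mul_integral (α : ℝ) {z : ℝ} (hz : 0 < z) :
    fermi α z = z ^ (α + 1) * ∫ t in Ioi 0, t ^ α / (1 + exp (z * (t - 1))) := by
  have hsubst := integral_comp_mul_left_Ioi' (fun x => x ^ α / (1 + exp (x - z))) 0 hz
  have hintegrand : ∫ t in Ioi 0, (z * t) ^ α / (1 + exp (z * t - z)) =
      ∫ t in Ioi 0, z ^ α * (t ^ α / (1 + exp (z * (t - 1)))) := by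
    refine setIntegral_congr_fun measurableSet_Ioi fun t ht => ?_
    rw [mul_rpow hz.le ht.le, mul_div_assoc, mul_sub, mul_one]
  rw [mul_zero, hintegrand, integral_const_mul, smul_eq_mul] at hsubst
  rw [fermi, ← hsubst, rpow_add_one hz.ne']
  ring

theorem inv_one_add_exp_mul_sub_one_le_exp {z : ℝ} (hz : 1 ≤ z) (t : ℝ) :
    (1 + exp (z * (t - 1)))⁻¹ ≤ exp (1 - t) := by
  rcases le_or_gt t 1 with ht | ht
  · calc (1 + exp (z * (t - 1)))⁻¹ ≤ 1 :=
          inv_le_one_of_one_le₀ (by linarith [exp_pos (z * (t - 1))])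
      _ ≤ exp (1 - t) := one_le_exp (by linarith)
  · calc (1 + exp (z * (t - 1)))⁻¹ ≤ (exp (z * (t - 1)))⁻¹ :=
          inv_anti₀ (exp_pos _) (by linarith [exp_pos (z * (t - 1))])
      _ = exp (-(z * (t - 1))) := (exp_neg _).symm
      _ ≤ exp (1 - t) := exp_le_exp.2 (by nlinarith)

theorem tendsto_div_one_add_exp_mul_of_neg (c : ℝ) {s : ℝ} (hs : s < 0) :
    Tendsto (fun z => c / (1 + exp (z * s))) atTop (𝓝 c) := by
  have hexp : Tendsto (fun z => exp (z * s)) atTop (𝓝 0) :=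
    tendsto_exp_atBot.comp (tendsto_id.atTop_mul_const_of_neg hs)
  have hlim := (tendsto_const_nhds (x := c)).div (tendsto_const_nhds.add hexp)
    (by norm_num : (1 : ℝ) + 0 ≠ 0)
  rwa [add_zero, div_one] at hlim

theorem tendsto_div_one_add_exp_mul_of_pos (c : ℝ) {s : ℝ} (hs : 0 < s) :
    Tendsto (fun z => c / (1 + exp (z * s))) atTop (𝓝 0) :=
  tendsto_const_nhds.div_atTop <| tendsto_atTop_add_const_left _ _ <|
    tendsto_exp_atTop.comp (tendsto_id.atTop_mul_const hs)

theorem integral_Ioi_indicator_Iio_one_rpow {α : ℝ} (hα : -1 < α) :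
    ∫ t in Ioi 0, (Iio 1).indicator (fun t => t ^ α) t = (α + 1)⁻¹ := by
  rw [setIntegral_indicator measurableSet_Iio, Ioi_inter_Iio, ← integral_Ioc_eq_integral_Ioo,
    ← intervalIntegral.integral_of_le zero_le_one, integral_rpow (Or.inl hα), one_rpow,
    zero_rpow (by linarith), sub_zero, one_div]

theorem tendsto_integral_rpow_div_one_add_exp_mul {α : ℝ} (hα : -1 < α) :
    Tendsto (fun z => ∫ t in Ioi 0, t ^ α / (1 + exp (z * (t - 1)))) atTop
      (𝓝 (α + 1)⁻¹) := by
  rw [← integral_Ioi_indicator_Iio_one_rpow hα]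
  refine tendsto_integral_filter_of_dominated_convergence (fun t => exp 1 * (exp (-t) * t ^ α))
    (Eventually.of_forall fun z => ?_) ?_ ?_ ?_
  · refine ContinuousOn.aestronglyMeasurable ?_ measurableSet_Ioi
    exact (continuousOn_id.rpow_const fun t ht => Or.inl (ne_of_gt ht)).div (by fun_prop)
      fun t _ => by positivity
  · filter_upwards [eventually_ge_atTop 1] with z hz
    filter_upwards [ae_restrict_mem measurableSet_Ioi] with t (ht : 0 < t)
    rw [norm_of_nonneg (by positivity), div_eq_mul_inv]
    calc t ^ α * (1 + exp (z * (t - 1)))⁻¹ ≤ t ^ α * exp (1 - t) :=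
          mul_le_mul_of_nonneg_left (inv_one_add_exp_mul_sub_one_le_exp hz t) (by positivity)
      _ = exp 1 * (exp (-t) * t ^ α) := by rw [sub_eq_add_neg, exp_add]; ring
  · simpa using (GammaIntegral_convergent (show 0 < α + 1 by linarith)).const_mul (exp 1)
  · filter_upwards [ae_restrict_of_ae (measure_eq_zero_iff_ae_notMem.1 (measure_singleton 1))]
      with t (ht : t ≠ 1)
    rcases ht.lt_or_gt with ht | ht
    · rw [indicator_of_mem (show t ∈ Iio 1 from ht)]
      exact tendsto_div_one_add_exp_mul_of_neg _ (by linarith)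
    · rw [indicator_of_notMem (show t ∉ Iio 1 from not_lt.2 ht.le)]
      exact tendsto_div_one_add_exp_mul_of_pos _ (by linarith)

/-- for `α > −1`, `f_α(z) ∼ z^{α+1}/(α+1)` as `z → +∞`, i.e.
`(α+1) f_α(z) / z^{α+1} → 1`. -/
theorem fermi_asymptotics_at_top (α : ℝ) (hα : -1 < α) :
    Filter.Tendsto (fun z : ℝ => (α + 1) * fermi α z / z ^ (α + 1))
      Filter.atTop (nhds 1) := by
  have hlim := (tendsto_integral_rpow_div_one_add_exp_mul hα).const_mul (α + 1)
  rw [mul_inv_cancel₀ (by linarith)] at hlim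
  refine hlim.congr' ?_
  filter_upwards [eventually_gt_atTop 0] with z hz
  rw [fermi_eq_rpow_mul_integral α hz]
  field_simp [(rpow_pos_of_pos hz _).ne']
end

section
/- Let R : ℝ → ℝ be continuous with 0 ≤ R(z) ≤ z for all z ≥ 0. Suppose x, y : [s₀, s₁] → ℝ are differentiable and satisfy x'(s) = y(s) − x(s) and y'(s) = 2 y(s) − e^{2s} R(e^{−2s} y(s)) x(s) on [s₀, s₁]. If x(s₀) ≥ 0 and y(s₀) > 0, then x(s) ≥ 0 and y(s) > 0 for all s ∈ [s₀, s₁]; that is, the open positive quadrant (together with its x ≥ 0 boundary) is forward invariant under the flow. -/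
/-!
While `y > 0`, the bound `0 ≤ e^{2s} R(e^{-2s} y) ≤ y` makes the nonlinear term at most
`(sup |x|) · y`, so `y` is fenced from below by a decaying exponential and never reaches `0`.
Then `x' = y - x > 0` wherever `x = 0`, so `x` cannot cross below `0` either.
-/

open Real Set

theorem boundary_le_image_of_deriv_boundary_lt_deriv {f f' B B' : ℝ → ℝ} {a b : ℝ}
    (hf : ∀ s ∈ Icc a b, HasDerivWithinAt f (f' s) (Icc a b) s)
    (hB : ∀ s, HasDerivAt B (B' s) s) (ha : B a ≤ f a)
    (bound : ∀ s ∈ Ico a b, f s = B s → B' s < f' s) :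
    ∀ ⦃s⦄, s ∈ Icc a b → B s ≤ f s := by
  have hle := image_le_of_deriv_right_lt_deriv_boundary (f := fun s => -f s)
    (f' := fun s => -f' s) (B := fun s => -B s) (B' := fun s => -B' s)
    (fun s hs => (hf s hs).continuousWithinAt.neg)
    (fun s hs => ((hf s (Ico_subset_Icc_self hs)).mono_of_mem_nhdsWithin
      (Icc_mem_nhdsGE_of_mem hs)).neg)
    (neg_le_neg ha) (fun s => (hB s).neg)
    (fun s hs hfB => neg_lt_neg (bound s hs (neg_inj.mp hfB)))
  exact fun s hs => neg_le_neg_iff.mp (hle hs)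

theorem nonneg_of_deriv_pos_of_eq_zero {f f' : ℝ → ℝ} {a b : ℝ}
    (hf : ∀ s ∈ Icc a b, HasDerivWithinAt f (f' s) (Icc a b) s)
    (bound : ∀ s ∈ Ico a b, f s = 0 → 0 < f' s) (ha : 0 ≤ f a) :
    ∀ ⦃s⦄, s ∈ Icc a b → 0 ≤ f s :=
  boundary_le_image_of_deriv_boundary_lt_deriv hf (fun _ => hasDerivAt_const _ _) ha bound

theorem pos_of_neg_mul_le_deriv_of_pos {f f' : ℝ → ℝ} {a b : ℝ} (C : ℝ)
    (hf : ∀ s ∈ Icc a b, HasDerivWithinAt f (f' s) (Icc a b) s)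
    (bound : ∀ s ∈ Ico a b, 0 < f s → -C * f s ≤ f' s) (ha : 0 < f a) :
    ∀ ⦃s⦄, s ∈ Icc a b → 0 < f s := by
  -- `B' = -(C + 1) B` decays strictly faster than `f` can, so `B` is a strict lower fence
  set B : ℝ → ℝ := fun s => f a * exp (-(C + 1) * (s - a))
  have hB : ∀ s, HasDerivAt B (-(C + 1) * B s) s := fun s => by
    have := (((hasDerivAt_id' s).sub_const a).const_mul (-(C + 1))).exp.const_mul (f a)
    exact this.congr_deriv (by ring)
  have hBpos : ∀ s, 0 < B s := fun s => mul_pos ha (exp_pos _)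
  have hBa : B a = f a := by simp only [B, sub_self, mul_zero, exp_zero, mul_one]
  have hBf := boundary_le_image_of_deriv_boundary_lt_deriv hf hB hBa.le fun s hs hfB => by
    have hderiv := bound s hs (hfB ▸ hBpos s)
    rw [hfB] at hderiv
    linarith [hBpos s]
  exact fun s hs => (hBpos s).trans_le (hBf hs)

theorem exp_mul_apply_exp_neg_mul_mem_Icc {R : ℝ → ℝ}
    (hR : ∀ z : ℝ, 0 ≤ z → 0 ≤ R z ∧ R z ≤ z) (t : ℝ) {y : ℝ} (hy : 0 ≤ y) :
    exp t * R (exp (-t) * y) ∈ Icc 0 y := by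
  obtain ⟨hR0, hR1⟩ := hR _ (mul_nonneg (exp_nonneg _) hy)
  refine ⟨mul_nonneg (exp_nonneg _) hR0, ?_⟩
  calc exp t * R (exp (-t) * y) ≤ exp t * (exp (-t) * y) := by gcongr
    _ = y := by rw [← mul_assoc, ← exp_add, add_neg_cancel, exp_zero, one_mul]

theorem mul_le_mul_of_mem_Icc_of_abs_le {r x y M : ℝ} (hr : r ∈ Icc 0 y) (hx : |x| ≤ M) :
    r * x ≤ M * y := by
  have hM : 0 ≤ M := (abs_nonneg x).trans hx
  calc r * x ≤ r * M := mul_le_mul_of_nonneg_left ((le_abs_self x).trans hx) hr.1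
    _ ≤ y * M := mul_le_mul_of_nonneg_right hr.2 hM
    _ = M * y := mul_comm y M

theorem positive_quadrant_forward_invariant_general (R x y : ℝ → ℝ) (s₀ s₁ : ℝ)
    (hR : ∀ z : ℝ, 0 ≤ z → 0 ≤ R z ∧ R z ≤ z)
    (hx : ∀ s ∈ Set.Icc s₀ s₁, HasDerivWithinAt x (y s - x s) (Set.Icc s₀ s₁) s)
    (hy : ∀ s ∈ Set.Icc s₀ s₁, HasDerivWithinAt y
      (2 * y s - Real.exp (2 * s) * R (Real.exp (-2 * s) * y s) * x s) (Set.Icc s₀ s₁) s)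
    (hx0 : 0 ≤ x s₀) (hy0 : 0 < y s₀) :
    ∀ s ∈ Set.Icc s₀ s₁, 0 ≤ x s ∧ 0 < y s := by
  obtain ⟨M, hM⟩ := isCompact_Icc.exists_bound_of_continuousOn
    fun s hs => (hx s hs).continuousWithinAt
  -- while `y > 0`, `|x| ≤ M` gives `y' ≥ -(M - 2) y` whatever the sign of `x`
  have hy_pos : ∀ s ∈ Icc s₀ s₁, 0 < y s := by
    refine pos_of_neg_mul_le_deriv_of_pos (M - 2) hy (fun s hs hys => ?_) hy0
    have hterm := mul_le_mul_of_mem_Icc_of_abs_le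
      (exp_mul_apply_exp_neg_mul_mem_Icc hR (2 * s) hys.le) (hM s (Ico_subset_Icc_self hs))
    rw [← neg_mul] at hterm
    linarith
  have hx_nonneg : ∀ s ∈ Icc s₀ s₁, 0 ≤ x s :=
    nonneg_of_deriv_pos_of_eq_zero hx (fun s hs hxs => by
      rw [hxs, sub_zero]
      exact hy_pos s (Ico_subset_Icc_self hs)) hx0
  exact fun s hs => ⟨hx_nonneg s hs, hy_pos s hs⟩

/-- forward invariance of the positive quadrant (with its
`x ≥ 0` boundary) for the non-autonomous system `x' = y − x`,
`y' = 2y − e^{2s} R(e^{−2s} y) x` when `0 ≤ R(z) ≤ z` for `z ≥ 0`. -/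
theorem positive_quadrant_forward_invariant (R x y : ℝ → ℝ) (s₀ s₁ : ℝ)
    (hs : s₀ ≤ s₁)
    (hRc : Continuous R)
    (hR : ∀ z : ℝ, 0 ≤ z → 0 ≤ R z ∧ R z ≤ z)
    (hx : ∀ s ∈ Set.Icc s₀ s₁, HasDerivWithinAt x (y s - x s) (Set.Icc s₀ s₁) s)
    (hy : ∀ s ∈ Set.Icc s₀ s₁, HasDerivWithinAt y
      (2 * y s - Real.exp (2 * s) * R (Real.exp (-2 * s) * y s) * x s) (Set.Icc s₀ s₁) s)
    (hx0 : 0 ≤ x s₀) (hy0 : 0 < y s₀) :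
    ∀ s ∈ Set.Icc s₀ s₁, 0 ≤ x s ∧ 0 < y s :=
  positive_quadrant_forward_invariant_general R x y s₀ s₁ hR hx hy hx0 hy0
end
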